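/- Let $B$ be as above (random sample mean set to 0 on empty sample). Then $\mathrm{Var}[\hat{\mu}] \leq \mathbb{E}\left[\frac{\sigma^2}{B}\,\middle|\, B > 0\right] + \Pr[B = 0]\,\mu^2$, assuming $\Pr[B > 0] > 0$. -/

import Mathlib

/-!
Write `S_n` for the mean of the first `n` samples, so that `μhat = S_B`. Since the variance is the
least mean squared deviation, `Var μhat ≤ E[(S_B - μ)²]`. Because `B` is independent of the
samples, this expectation splits along the fibres `{B = n}` as `∑ₙ P(B = n) E[(S_n - μ)²]`, where
`E[(S_n - μ)²] = σ²/n` for `n ≥ 1` and `E[(S_0 - μ)²] = μ²`. The sum is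
`E[σ²/B; B > 0] + P(B = 0) μ²`, and `E[σ²/B; B > 0] ≤ E[σ²/B | B > 0]` because conditioning
divides by `P(B > 0) ≤ 1`.
-/

open MeasureTheory ProbabilityTheory Finset
open scoped ENNReal

section Fibres

variable {Ω ι : Type*} {m mΩ : MeasurableSpace Ω} {P : Measure Ω}
  [MeasurableSpace ι] [MeasurableSingletonClass ι] {N : Ω → ι}

theorem aemeasurable_apply_of_measurable_index [Countable ι] {β : Type*} [MeasurableSpace β]
    (hN : Measurable N) {f : ι → Ω → β} (hf : ∀ i, AEMeasurable (f i) P) :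
    AEMeasurable (fun ω => f (N ω) ω) P := by
  refine ⟨fun ω => (hf (N ω)).mk _ ω, ?_, ?_⟩
  · exact (measurable_from_prod_countable_left (f := fun p : Ω × ι => (hf p.2).mk _ p.1)
      fun i => (hf i).measurable_mk).comp (measurable_id.prodMk hN)
  · filter_upwards [ae_all_iff.2 fun i => (hf i).ae_eq_mk] with ω hω using hω (N ω)

theorem lintegral_eq_tsum_setLIntegral_fiber [Countable ι] (hN : Measurable N)
    (g : Ω → ℝ≥0∞) :
    ∫⁻ ω, g ω ∂P = ∑' i, ∫⁻ ω in N ⁻¹' {i}, g ω ∂P := by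
  rw [← lintegral_iUnion (fun i => hN (measurableSet_singleton i)) (pairwise_disjoint_fiber N),
    ← Set.preimage_iUnion, Set.iUnion_of_singleton, Set.preimage_univ, setLIntegral_univ]

theorem lintegral_comp_eq_tsum [Countable ι] (hN : Measurable N) (φ : ι → ℝ≥0∞) :
    ∫⁻ ω, φ (N ω) ∂P = ∑' i, P (N ⁻¹' {i}) * φ i := by
  rw [lintegral_eq_tsum_setLIntegral_fiber hN]
  refine tsum_congr fun i => ?_
  rw [setLIntegral_congr_fun (hN (measurableSet_singleton i)) (g := fun _ => φ i)
    fun ω (hω : N ω = i) => by rw [hω], setLIntegral_const, mul_comm]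

theorem setLIntegral_fiber_eq_mul_of_indep (hN : Measurable N)
    (hind : Indep (MeasurableSpace.comap N inferInstance) m P) {g : Ω → ℝ≥0∞}
    (hgm : Measurable[m] g) (hg : AEMeasurable g P) (i : ι) :
    ∫⁻ ω in N ⁻¹' {i}, g ω ∂P = P (N ⁻¹' {i}) * ∫⁻ ω, g ω ∂P := by
  have hfib : MeasurableSet (N ⁻¹' {i}) := hN (measurableSet_singleton i)
  have hfib' : MeasurableSet[MeasurableSpace.comap N inferInstance] (N ⁻¹' {i}) :=
    ⟨{i}, measurableSet_singleton i, rfl⟩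
  have hφ : Measurable[MeasurableSpace.comap N inferInstance]
      ((N ⁻¹' {i}).indicator fun _ => (1 : ℝ≥0∞)) :=
    measurable_const.indicator hfib'
  have hindep : IndepFun ((N ⁻¹' {i}).indicator fun _ => (1 : ℝ≥0∞)) g P :=
    indep_of_indep_of_le_right (indep_of_indep_of_le_left hind hφ.comap_le) hgm.comap_le
  rw [← lintegral_indicator hfib, ← one_mul (P _), ← lintegral_indicator_const hfib,
    ← lintegral_mul_eq_lintegral_mul_lintegral_of_indepFun''
      (measurable_const.indicator hfib).aemeasurable hg hindep]
  congr with ω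
  by_cases hω : ω ∈ N ⁻¹' {i} <;> simp [hω]

theorem lintegral_apply_eq_tsum_of_indep [Countable ι] (hN : Measurable N)
    (hind : Indep (MeasurableSpace.comap N inferInstance) m P) {f : ι → Ω → ℝ≥0∞}
    (hfm : ∀ i, Measurable[m] (f i)) (hf : ∀ i, AEMeasurable (f i) P) :
    ∫⁻ ω, f (N ω) ω ∂P = ∑' i, P (N ⁻¹' {i}) * ∫⁻ ω, f i ω ∂P := by
  rw [lintegral_eq_tsum_setLIntegral_fiber hN]
  refine tsum_congr fun i => ?_
  rw [setLIntegral_congr_fun (hN (measurableSet_singleton i)) (g := f i)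
    fun ω (hω : N ω = i) => by rw [hω],
    setLIntegral_fiber_eq_mul_of_indep hN hind (hfm i) (hf i)]

end Fibres

section Cond

variable {Ω : Type*} [MeasurableSpace Ω] {P : Measure Ω} [IsZeroOrProbabilityMeasure P]
  {s : Set Ω}

theorem lintegral_le_lintegral_cond {f : Ω → ℝ≥0∞} (hf : f.support ⊆ s) :
    ∫⁻ ω, f ω ∂P ≤ ∫⁻ ω, f ω ∂P[|s] := by
  rw [← setLIntegral_eq_of_support_subset hf, ProbabilityTheory.cond, lintegral_smul_measure,
    smul_eq_mul]
  exact le_mul_of_one_le_left' (ENNReal.one_le_inv.2 prob_le_one)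

theorem lintegral_ofReal_le_ofReal_integral_cond {w : Ω → ℝ} (hw_nonneg : 0 ≤ w)
    (hw : Integrable w P[|s]) (hws : w.support ⊆ s) :
    ∫⁻ ω, ENNReal.ofReal (w ω) ∂P ≤ ENNReal.ofReal (∫ ω, w ω ∂P[|s]) := by
  rw [ofReal_integral_eq_lintegral_ofReal hw (ae_of_all _ hw_nonneg)]
  exact lintegral_le_lintegral_cond
    ((Function.support_comp_subset ENNReal.ofReal_zero w).trans hws)

end Cond

theorem variance_le_toReal_lintegral_sq_sub {Ω : Type*} [MeasurableSpace Ω] {P : Measure Ω}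
    [IsProbabilityMeasure P] {Y : Ω → ℝ} (hY : AEStronglyMeasurable Y P) (c : ℝ) :
    Var[Y; P] ≤ (∫⁻ ω, ENNReal.ofReal ((Y ω - c) ^ 2) ∂P).toReal := by
  have hYc : AEStronglyMeasurable (fun ω => Y ω - c) P :=
    (hY.aemeasurable.sub_const c).aestronglyMeasurable
  rw [← variance_sub_const hY c, ← integral_eq_lintegral_of_nonneg_ae
    (ae_of_all _ fun _ => sq_nonneg _) (by fun_prop)]
  exact variance_le_expectation_sq hYc

section SampleMean

variable {Ω : Type*} {m mΩ : MeasurableSpace Ω} {P : Measure Ω} {X : ℕ → Ω → ℝ}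

/-- At `n = 0` this is `0 / 0 = 0`, the convention for `μhat` on an empty sample. -/
noncomputable def sampleMean (X : ℕ → Ω → ℝ) (n : ℕ) (ω : Ω) : ℝ :=
  (∑ i ∈ range n, X i ω) / n

omit mΩ in
theorem measurable_sampleMean (hX : ∀ i, Measurable[m] (X i)) (n : ℕ) :
    Measurable[m] (sampleMean X n) :=
  (Finset.measurable_sum _ fun i _ => hX i).div_const _

theorem memLp_sampleMean (hX : ∀ i, MemLp (X i) 2 P) (n : ℕ) : MemLp (sampleMean X n) 2 P := by
  convert (memLp_finsetSum' (range n) fun i _ => hX i).const_mul (n : ℝ)⁻¹ using 1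
  ext ω
  simp [sampleMean, div_eq_inv_mul]

theorem integral_sampleMean (hX : ∀ i, Integrable (X i) P) {μ : ℝ} (hmean : ∀ i, P[X i] = μ)
    {n : ℕ} (hn : n ≠ 0) : P[sampleMean X n] = μ := by
  simp only [sampleMean]
  rw [integral_div, integral_finsetSum _ fun i _ => hX i]
  simp [hmean, hn]

theorem variance_sampleMean [IsProbabilityMeasure P] (hX : ∀ i, MemLp (X i) 2 P)
    (hindep : Pairwise fun i j => IndepFun (X i) (X j) P) {σ2 : ℝ}
    (hvar : ∀ i, Var[X i; P] = σ2) (n : ℕ) : Var[sampleMean X n; P] = σ2 / n := by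
  have hsum : Var[∑ i ∈ range n, X i; P] = n * σ2 := by
    rw [IndepFun.variance_sum (fun i _ => hX i) fun i _ j _ hij => hindep hij]
    simp [hvar]
  have : sampleMean X n = fun ω => (n : ℝ)⁻¹ * (∑ i ∈ range n, X i) ω := by
    ext ω; simp [sampleMean, Finset.sum_apply, div_eq_inv_mul]
  rw [this, variance_const_mul, hsum]
  rcases eq_or_ne n 0 with rfl | hn
  · simp
  · field_simp

theorem lintegral_sq_sub_sampleMean [IsProbabilityMeasure P] (hX : ∀ i, MemLp (X i) 2 P)
    (hindep : Pairwise fun i j => IndepFun (X i) (X j) P) {μ σ2 : ℝ} (hmean : ∀ i, P[X i] = μ)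
    (hvar : ∀ i, Var[X i; P] = σ2) (n : ℕ) :
    ∫⁻ ω, ENNReal.ofReal ((sampleMean X n ω - μ) ^ 2) ∂P
      = ENNReal.ofReal (σ2 / n) + if n = 0 then ENNReal.ofReal (μ ^ 2) else 0 := by
  rcases eq_or_ne n 0 with rfl | hn
  · simp [sampleMean]
  · have hsq : Integrable (fun ω => (sampleMean X n ω - μ) ^ 2) P :=
      ((memLp_sampleMean hX n).sub (memLp_const μ)).integrable_sq
    rw [if_neg hn, add_zero, ← ofReal_integral_eq_lintegral_ofReal hsq
      (ae_of_all _ fun _ => sq_nonneg _), ← variance_sampleMean hX hindep hvar n,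
      variance_eq_integral (memLp_sampleMean hX n).aemeasurable,
      integral_sampleMean (fun i => (hX i).integrable one_le_two) hmean hn]

end SampleMean

theorem integrable_const_div_natCast {Ω : Type*} [MeasurableSpace Ω] {Q : Measure Ω}
    [IsFiniteMeasure Q] {B : Ω → ℕ} (hB : Measurable B) (c : ℝ) :
    Integrable (fun ω => c / (B ω : ℝ)) Q := by
  refine (integrable_const ‖c‖).mono'
    ((measurable_from_top (f := fun n : ℕ => c / n)).comp hB).aestronglyMeasurable
    (ae_of_all _ fun ω => ?_)
  rw [norm_div, Real.norm_natCast]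
  exact div_nat_le_self_of_nonnneg (norm_nonneg c) _

theorem lintegral_sq_sub_sampleMean_comp_of_indep {Ω : Type*} [MeasurableSpace Ω]
    {P : Measure Ω} [IsProbabilityMeasure P] {B : Ω → ℕ} (hB : Measurable B)
    {X : ℕ → Ω → ℝ} (hX : ∀ i, MemLp (X i) 2 P)
    (hindep : Pairwise fun i j => IndepFun (X i) (X j) P)
    (hBX : Indep (MeasurableSpace.comap B inferInstance)
      (⨆ i, MeasurableSpace.comap (X i) inferInstance) P)
    {μ σ2 : ℝ} (hmean : ∀ i, P[X i] = μ) (hvar : ∀ i, Var[X i; P] = σ2) :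
    ∫⁻ ω, ENNReal.ofReal ((sampleMean X (B ω) ω - μ) ^ 2) ∂P
      = ∫⁻ ω, ENNReal.ofReal (σ2 / B ω) ∂P + P (B ⁻¹' {0}) * ENNReal.ofReal (μ ^ 2) := by
  have hXm (i : ℕ) : Measurable[⨆ i, MeasurableSpace.comap (X i) inferInstance] (X i) :=
    Measurable.of_comap_le (le_iSup (fun i => MeasurableSpace.comap (X i) inferInstance) i)
  rw [lintegral_apply_eq_tsum_of_indep hB hBX
      (f := fun n ω => ENNReal.ofReal ((sampleMean X n ω - μ) ^ 2))
      (fun n => (((measurable_sampleMean hXm n).sub_const μ).pow_const 2).ennreal_ofReal)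
      (fun n =>
        (((memLp_sampleMean hX n).aemeasurable.sub_const μ).pow_const 2).ennreal_ofReal),
    lintegral_comp_eq_tsum hB (fun n => ENNReal.ofReal (σ2 / n))]
  simp_rw [lintegral_sq_sub_sampleMean hX hindep hmean hvar, mul_add, mul_ite, mul_zero]
  rw [ENNReal.tsum_add, tsum_ite_eq]

theorem stmt_14_general {Ω : Type*} [MeasureSpace Ω] [IsProbabilityMeasure (ℙ : Measure Ω)]
    (B : Ω → ℕ) (hB : Measurable B)
    (X : ℕ → Ω → ℝ) (hL2 : ∀ i, MemLp (X i) 2 ℙ)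
    (hindep : iIndepFun X ℙ)
    (hBX : Indep (MeasurableSpace.comap B inferInstance)
      (⨆ i, MeasurableSpace.comap (X i) inferInstance) ℙ)
    (μ σ2 : ℝ) (hmean : ∀ i, ∫ ω, X i ω ∂ℙ = μ)
    (hvar : ∀ i, variance (X i) ℙ = σ2)
    (μhat : Ω → ℝ)
    (hμhat : ∀ ω, μhat ω =
      if 0 < B ω then (∑ i ∈ Finset.range (B ω), X i ω) / (B ω : ℝ) else 0) :
    variance μhat ℙ ≤
      (∫ ω, σ2 / (B ω : ℝ) ∂(ℙ[|{ω | 0 < B ω}]))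
        + (ℙ {ω | B ω = 0}).toReal * μ ^ 2 := by
  have hσ2 : 0 ≤ σ2 := hvar 0 ▸ variance_nonneg _ _
  have hμhat_eq : μhat = fun ω => sampleMean X (B ω) ω := by
    ext ω
    rw [hμhat]
    split_ifs with h
    · rfl
    · simp [sampleMean, Nat.eq_zero_of_not_pos h]
  have hμhat_meas : AEStronglyMeasurable μhat ℙ := hμhat_eq ▸
    (aemeasurable_apply_of_measurable_index hB fun n =>
      (memLp_sampleMean hL2 n).aemeasurable).aestronglyMeasurable
  have hw_nonneg (ω : Ω) : 0 ≤ σ2 / (B ω : ℝ) := div_nonneg hσ2 (Nat.cast_nonneg _)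
  have hw_supp : (fun ω => σ2 / (B ω : ℝ)).support ⊆ {ω | 0 < B ω} := fun ω hω => by
    contrapose! hω
    simp_all
  calc variance μhat ℙ ≤ (∫⁻ ω, ENNReal.ofReal ((μhat ω - μ) ^ 2) ∂ℙ).toReal :=
        variance_le_toReal_lintegral_sq_sub hμhat_meas μ
    _ = (∫⁻ ω, ENNReal.ofReal (σ2 / B ω) ∂ℙ
          + ℙ {ω | B ω = 0} * ENNReal.ofReal (μ ^ 2)).toReal := by
      rw [hμhat_eq, lintegral_sq_sub_sampleMean_comp_of_indep hB hL2
        (fun i j hij => hindep.indepFun hij) hBX hmean hvar]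
      rfl
    _ ≤ (ENNReal.ofReal (∫ ω, σ2 / (B ω : ℝ) ∂(ℙ[|{ω | 0 < B ω}]))
          + ℙ {ω | B ω = 0} * ENNReal.ofReal (μ ^ 2)).toReal :=
      ENNReal.toReal_mono (by finiteness) (add_le_add_left
        (lintegral_ofReal_le_ofReal_integral_cond hw_nonneg
          (integrable_const_div_natCast hB σ2) hw_supp) _)
    _ = _ := by
      rw [ENNReal.toReal_add (by finiteness) (by finiteness), ENNReal.toReal_mul,
        ENNReal.toReal_ofReal (sq_nonneg μ),
        ENNReal.toReal_ofReal (integral_nonneg hw_nonneg)]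

theorem stmt_14 {Ω : Type*} [MeasureSpace Ω] [IsProbabilityMeasure (ℙ : Measure Ω)]
    (B : Ω → ℕ) (hB : Measurable B)
    (X : ℕ → Ω → ℝ) (hL2 : ∀ i, MemLp (X i) 2 ℙ)
    (hindep : iIndepFun X ℙ)
    (hident : ∀ i j, IdentDistrib (X i) (X j) ℙ ℙ)
    (hBX : Indep (MeasurableSpace.comap B inferInstance)
      (⨆ i, MeasurableSpace.comap (X i) inferInstance) ℙ)
    (μ σ2 : ℝ) (hmean : ∀ i, ∫ ω, X i ω ∂ℙ = μ)
    (hvar : ∀ i, variance (X i) ℙ = σ2)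
    (hpos : ℙ {ω | 0 < B ω} ≠ 0)
    (μhat : Ω → ℝ)
    (hμhat : ∀ ω, μhat ω =
      if 0 < B ω then (∑ i ∈ Finset.range (B ω), X i ω) / (B ω : ℝ) else 0) :
    variance μhat ℙ ≤
      (∫ ω, σ2 / (B ω : ℝ) ∂(ℙ[|{ω | 0 < B ω}]))
        + (ℙ {ω | B ω = 0}).toReal * μ ^ 2 :=
  stmt_14_general B hB X hL2 hindep hBX μ σ2 hmean hvar μhat hμhat
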